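/- arXiv:2601.08153 — 3 statements merged into one kernel-verified Lean document; each statement's English description precedes it below -/
import Mathlib

section
/- Let (X,‖·‖) be a finite-dimensional real normed space, n ≥ 2, ψ ∈ Ψ_n, and v_1,…,v_n ∈ X. Define f(u) := |||(u−v_1,…,u−v_n)|||_ψ for u ∈ X. Then the set of global minimizers of f over X is compact; moreover, every minimizer u satisfies ‖u‖ ≤ (1 + 1/n)·Σ_{i=1}^n ‖v_i‖. -/
/-!
Every `ψ ∈ Ψ_n` satisfies `max_i t_i ≤ ψ t ≤ 1` on the simplex: the upper bound is the maximum
principle for a convex function on the convex hull of the vertices `e_i`, the lower bound comes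
from renormalizing away the coordinates other than `i` one at a time. Hence
`‖x_i‖ ≤ |||x|||_ψ ≤ ∑ ‖x_j‖`, which makes `f` continuous, and a minimizer `u` satisfies
`‖u - v_i‖ ≤ f u ≤ f 0 ≤ ∑ ‖v_j‖`; averaging `‖u‖ ≤ ‖u - v_i‖ + ‖v_i‖` over `i` gives the bound,
and the set of minimizers is closed and bounded in a finite-dimensional space.
-/

open Finset

/-- The class `Ψ_n` of continuous convex functions on the standard simplex `Ω_n`
with `ψ(e_i) = 1` and the renormalization inequality. -/
def PsiClass (n : ℕ) (ψ : (Fin n → ℝ) → ℝ) : Prop :=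
  ContinuousOn ψ (stdSimplex ℝ (Fin n)) ∧
  ConvexOn ℝ (stdSimplex ℝ (Fin n)) ψ ∧
  (∀ i : Fin n, ψ (fun j => if j = i then 1 else 0) = 1) ∧
  (∀ t ∈ stdSimplex ℝ (Fin n), ∀ i : Fin n, t i < 1 →
    (1 - t i) * ψ (fun j => if j = i then 0 else t j / (1 - t i)) ≤ ψ t)

-- The `ψ`-product norm `|||x|||_ψ` on `X^n`.
open scoped Classical in
noncomputable def prodNorm {X : Type*} [NormedAddCommGroup X] {n : ℕ}
    (ψ : (Fin n → ℝ) → ℝ) (x : Fin n → X) : ℝ :=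
  if x = 0 then 0 else (∑ i, ‖x i‖) * ψ (fun i => ‖x i‖ / ∑ j, ‖x j‖)

open Filter Topology

section Simplex

variable {ι : Type*} [Fintype ι] [DecidableEq ι]

lemma eq_ite_of_mem_stdSimplex_of_eq_one {t : ι → ℝ} (ht : t ∈ stdSimplex ℝ ι) {i : ι}
    (hi : t i = 1) : t = fun j => if j = i then 1 else 0 := by
  have hrest : ∑ j ∈ univ.erase i, t j = 0 := by
    linarith [add_sum_erase univ t (mem_univ i), ht.2]
  funext j
  by_cases hj : j = i
  · simp [hj, hi]
  · simp only [hj, if_false]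
    exact (sum_eq_zero_iff_of_nonneg fun k _ => ht.1 k).1 hrest j (mem_erase.2 ⟨hj, mem_univ j⟩)

lemma renormalize_mem_stdSimplex {t : ι → ℝ} (ht : t ∈ stdSimplex ℝ ι) {i : ι} (hi : t i < 1) :
    (fun j => if j = i then 0 else t j / (1 - t i)) ∈ stdSimplex ℝ ι := by
  have hpos : 0 < 1 - t i := sub_pos.2 hi
  refine ⟨fun j => ?_, ?_⟩
  · dsimp only
    split_ifs
    exacts [le_rfl, div_nonneg (ht.1 j) hpos.le]
  · rw [← add_sum_erase univ _ (mem_univ i), if_pos rfl, zero_add,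
      sum_congr rfl fun j hj => if_neg (ne_of_mem_erase hj), ← sum_div,
      div_eq_one_iff_eq hpos.ne']
    linarith [add_sum_erase univ t (mem_univ i), ht.2]

lemma le_one_of_convexOn_stdSimplex {ψ : (ι → ℝ) → ℝ} (hconv : ConvexOn ℝ (stdSimplex ℝ ι) ψ)
    (hvert : ∀ i : ι, ψ (fun j => if j = i then 1 else 0) = 1)
    {t : ι → ℝ} (ht : t ∈ stdSimplex ℝ ι) : ψ t ≤ 1 := by
  rw [← convexHull_basis_eq_stdSimplex] at ht
  obtain ⟨_, ⟨i, rfl⟩, hle⟩ :=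
    hconv.exists_ge_of_mem_convexHull
      (convexHull_basis_eq_stdSimplex ℝ ι ▸ subset_convexHull ℝ _) ht
  simpa only [eq_comm (a := i), hvert] using hle

end Simplex

section Renormalization

variable {ι : Type*} [Fintype ι] [DecidableEq ι] {ψ : (ι → ℝ) → ℝ}
  (hvert : ∀ i : ι, ψ (fun j => if j = i then 1 else 0) = 1)
  (hren : ∀ t ∈ stdSimplex ℝ ι, ∀ i : ι, t i < 1 →
    (1 - t i) * ψ (fun j => if j = i then 0 else t j / (1 - t i)) ≤ ψ t)
include hvert hren

lemma apply_le_of_eq_zero_off (i : ι) (s : Finset ι) :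
    ∀ t ∈ stdSimplex ℝ ι, (∀ j ∉ s, j ≠ i → t j = 0) → t i ≤ ψ t := by
  induction s using Finset.induction_on with
  | empty =>
    intro t ht hzero
    have hti : t i = 1 := by
      rw [← ht.2, sum_eq_single i (fun j _ hj => hzero j (notMem_empty j) hj) (by simp)]
    rw [eq_ite_of_mem_stdSimplex_of_eq_one ht hti, hvert]
    simp
  | insert j s hjs ih =>
    intro t ht hzero
    by_cases hji : j = i
    · subst hji
      exact ih t ht fun k hk hki => hzero k (by simp [hk, hki]) hki
    rcases (mem_Icc_of_mem_stdSimplex ht j).2.lt_or_eq with htj | htj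
    · set r : ι → ℝ := fun k => if k = j then 0 else t k / (1 - t j) with hr
      have hpos : 0 < 1 - t j := sub_pos.2 htj
      have hri : r i ≤ ψ r := ih r (renormalize_mem_stdSimplex ht htj) fun k hk hki => by
        by_cases hkj : k = j
        · simp [hr, hkj]
        · simp [hr, hkj, hzero k (by simp [hk, hkj]) hki]
      calc t i = (1 - t j) * r i := by
            simp only [hr, if_neg (Ne.symm hji)]
            field_simp
        _ ≤ (1 - t j) * ψ r := by gcongr
        _ ≤ ψ t := hren t ht j htj
    · rw [eq_ite_of_mem_stdSimplex_of_eq_one ht htj, hvert]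
      simp [Ne.symm hji]

lemma apply_le_of_mem_stdSimplex {t : ι → ℝ} (ht : t ∈ stdSimplex ℝ ι) (i : ι) : t i ≤ ψ t :=
  apply_le_of_eq_zero_off hvert hren i univ t ht fun j hj => absurd (mem_univ j) hj

end Renormalization

namespace PsiClass

variable {n : ℕ} {ψ : (Fin n → ℝ) → ℝ}

lemma apply_le_one (hψ : PsiClass n ψ) : ∀ t ∈ stdSimplex ℝ (Fin n), ψ t ≤ 1 :=
  fun _ ht => le_one_of_convexOn_stdSimplex hψ.2.1 hψ.2.2.1 ht

lemma le_apply (hψ : PsiClass n ψ) : ∀ t ∈ stdSimplex ℝ (Fin n), ∀ i, t i ≤ ψ t :=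
  fun _ ht i => apply_le_of_mem_stdSimplex hψ.2.2.1 hψ.2.2.2 ht i

end PsiClass

section ProdNorm

variable {X : Type*} [NormedAddCommGroup X] {n : ℕ} {ψ : (Fin n → ℝ) → ℝ}

lemma sum_norm_pos {x : Fin n → X} (hx : x ≠ 0) : 0 < ∑ i, ‖x i‖ := by
  obtain ⟨i, hi⟩ := Function.ne_iff.1 hx
  exact sum_pos' (fun j _ => norm_nonneg (x j)) ⟨i, mem_univ i, norm_pos_iff.2 hi⟩

lemma normalize_mem_stdSimplex {x : Fin n → X} (hx : x ≠ 0) :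
    (fun i => ‖x i‖ / ∑ j, ‖x j‖) ∈ stdSimplex ℝ (Fin n) :=
  ⟨fun i => div_nonneg (norm_nonneg _) (sum_norm_pos hx).le,
    by rw [← sum_div, div_self (sum_norm_pos hx).ne']⟩

lemma prodNorm_le_sum_norm (hle : ∀ t ∈ stdSimplex ℝ (Fin n), ψ t ≤ 1) (x : Fin n → X) :
    prodNorm ψ x ≤ ∑ i, ‖x i‖ := by
  unfold prodNorm
  split_ifs with hx
  · positivity
  · exact mul_le_of_le_one_right (sum_norm_pos hx).le (hle _ (normalize_mem_stdSimplex hx))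

lemma norm_le_prodNorm (hge : ∀ t ∈ stdSimplex ℝ (Fin n), ∀ i, t i ≤ ψ t)
    (x : Fin n → X) (i : Fin n) : ‖x i‖ ≤ prodNorm ψ x := by
  unfold prodNorm
  split_ifs with hx
  · simp [hx]
  · have hS := sum_norm_pos hx
    calc ‖x i‖ = (∑ j, ‖x j‖) * (‖x i‖ / ∑ j, ‖x j‖) := by field_simp
      _ ≤ _ := mul_le_mul_of_nonneg_left (hge _ (normalize_mem_stdSimplex hx) i) hS.le

lemma prodNorm_nonneg (hge : ∀ t ∈ stdSimplex ℝ (Fin n), ∀ i, t i ≤ ψ t)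
    (x : Fin n → X) : 0 ≤ prodNorm ψ x := by
  rcases eq_or_ne x 0 with rfl | hx
  · simp [prodNorm]
  · obtain ⟨i, -⟩ := Function.ne_iff.1 hx
    exact (norm_nonneg _).trans (norm_le_prodNorm hge x i)

lemma continuous_prodNorm (hcont : ContinuousOn ψ (stdSimplex ℝ (Fin n)))
    (hle : ∀ t ∈ stdSimplex ℝ (Fin n), ψ t ≤ 1)
    (hge : ∀ t ∈ stdSimplex ℝ (Fin n), ∀ i, t i ≤ ψ t) :
    Continuous (prodNorm ψ : (Fin n → X) → ℝ) := by
  have hS : Continuous fun x : Fin n → X => ∑ i, ‖x i‖ := by fun_prop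
  refine continuous_iff_continuousAt.2 fun x => ?_
  rcases eq_or_ne x 0 with rfl | hx
  · have h0 : Tendsto (fun y : Fin n → X => ∑ i, ‖y i‖) (𝓝 0) (𝓝 0) := by
      simpa using hS.tendsto 0
    simpa [ContinuousAt, prodNorm] using
      squeeze_zero (prodNorm_nonneg hge) (prodNorm_le_sum_norm hle) h0
  · have hnormalize : ContinuousOn (fun y : Fin n → X => fun i => ‖y i‖ / ∑ j, ‖y j‖) {0}ᶜ :=
      continuousOn_pi.2 fun i => by
        fun_prop (disch := exact fun y hy => (sum_norm_pos hy).ne')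
    have hformula : ContinuousOn
        (fun y : Fin n → X => (∑ i, ‖y i‖) * ψ (fun i => ‖y i‖ / ∑ j, ‖y j‖)) {0}ᶜ :=
      hS.continuousOn.mul (hcont.comp hnormalize fun y hy => normalize_mem_stdSimplex hy)
    refine (hformula.continuousAt (isOpen_compl_singleton.mem_nhds hx)).congr ?_
    filter_upwards [isOpen_compl_singleton.mem_nhds hx] with y hy
    exact (if_neg hy).symm

end ProdNorm

lemma norm_le_of_forall_prodNorm_sub_le {X : Type*} [NormedAddCommGroup X] {n : ℕ} (hn : 0 < n)
    {ψ : (Fin n → ℝ) → ℝ} (hle : ∀ t ∈ stdSimplex ℝ (Fin n), ψ t ≤ 1)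
    (hge : ∀ t ∈ stdSimplex ℝ (Fin n), ∀ i, t i ≤ ψ t) (v : Fin n → X) {u : X}
    (hu : ∀ w : X, prodNorm ψ (fun i => u - v i) ≤ prodNorm ψ (fun i => w - v i)) :
    ‖u‖ ≤ (1 + 1 / (n : ℝ)) * ∑ i, ‖v i‖ := by
  set S := ∑ i, ‖v i‖
  have hmin : prodNorm ψ (fun i => u - v i) ≤ S :=
    (hu 0).trans (by simpa [S] using prodNorm_le_sum_norm hle fun i => 0 - v i)
  have hcoord (i : Fin n) : ‖u‖ ≤ S + ‖v i‖ :=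
    calc ‖u‖ = ‖(u - v i) + v i‖ := by rw [sub_add_cancel]
      _ ≤ ‖u - v i‖ + ‖v i‖ := norm_add_le _ _
      _ ≤ S + ‖v i‖ := by grw [norm_le_prodNorm hge (fun i => u - v i) i, hmin]
  have havg : n * ‖u‖ ≤ n * S + S := by
    simpa [sum_add_distrib, S] using sum_le_sum fun i (_ : i ∈ univ) => hcoord i
  have hn' : (0 : ℝ) < n := Nat.cast_pos.2 hn
  rw [add_mul, one_div_mul_eq_div, one_mul, ← sub_le_iff_le_add', le_div_iff₀ hn']
  linarith

theorem stmt_11 {X : Type*} [NormedAddCommGroup X] [NormedSpace ℝ X]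
    [FiniteDimensional ℝ X]
    (n : ℕ) (hn : 2 ≤ n) (ψ : (Fin n → ℝ) → ℝ) (hψ : PsiClass n ψ)
    (v : Fin n → X) :
    IsCompact {u : X | ∀ w : X,
        prodNorm ψ (fun i => u - v i) ≤ prodNorm ψ (fun i => w - v i)} ∧
      ∀ u : X, (∀ w : X,
          prodNorm ψ (fun i => u - v i) ≤ prodNorm ψ (fun i => w - v i)) →
        ‖u‖ ≤ (1 + 1 / (n : ℝ)) * ∑ i, ‖v i‖ := by
  have hbound (u : X) :=
    norm_le_of_forall_prodNorm_sub_le (u := u) (by omega) hψ.apply_le_one hψ.le_apply v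
  refine ⟨Metric.isCompact_of_isClosed_isBounded ?_ ?_, hbound⟩
  · have hf : Continuous fun u : X => prodNorm ψ (fun i => u - v i) :=
      (continuous_prodNorm hψ.1 hψ.apply_le_one hψ.le_apply).comp (by fun_prop)
    simp only [Set.ofPred_forall]
    exact isClosed_iInter fun w => isClosed_le hf continuous_const
  · exact Metric.isBounded_closedBall.subset fun u hu => mem_closedBall_zero_iff.2 (hbound u hu)
end

section
/- Let X be a real Hilbert space, n ≥ 2, ψ ∈ Ψ_n, and v_1,…,v_n ∈ X distinct. Define f(u) := |||(u−v_1,…,u−v_n)|||_ψ for u ∈ X. Then the set of global minimizers of f over X is nonempty and is contained in the convex hull of {v_1,…,v_n}. -/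
/-!
The minimized function is `u ↦ ‖(‖u - v₁‖, …, ‖u - vₙ‖)‖_ψ`, and the ψ-norm is monotone on the
nonnegative orthant: it is convex and positively homogeneous, and the renormalization inequality
for `ψ` says that zeroing a coordinate does not increase it. It is strictly monotone when every
coordinate strictly increases. The metric projection `p` of `w ∉ K = conv {v₁, …, vₙ}` onto `K`
satisfies `‖w - y‖² ≥ ‖w - p‖² + ‖p - y‖²` for `y ∈ K`, so `p` is strictly closer than `w` to every
`vᵢ` and hence strictly better. Thus a minimizer over the compact set `K` is a global minimizer,
and no point outside `K` is one.
-/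

open Finset

section PsiNorm

variable {ι : Type*} [Fintype ι] {ψ : (ι → ℝ) → ℝ}

/-- On the nonnegative orthant this is the ψ-norm of `ℝ^ι`; at `a = 0` the junk value `0 / 0 = 0`
makes it `0` without a case split. -/
noncomputable def psiNorm (ψ : (ι → ℝ) → ℝ) (a : ι → ℝ) : ℝ :=
  (∑ i, a i) * ψ (fun i => a i / ∑ j, a j)

lemma div_sum_mem_stdSimplex {a : ι → ℝ} (ha : 0 ≤ a) (hs : ∑ i, a i ≠ 0) :
    (fun i => a i / ∑ j, a j) ∈ stdSimplex ℝ ι :=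
  ⟨fun i => div_nonneg (ha i) (sum_nonneg fun j _ => ha j), by rw [← sum_div, div_self hs]⟩

lemma psiNorm_smul {c : ℝ} (hc : 0 ≤ c) (a : ι → ℝ) : psiNorm ψ (c • a) = c * psiNorm ψ a := by
  rcases hc.eq_or_lt with rfl | hc
  · simp [psiNorm]
  · have hsum : ∑ i, (c • a) i = c * ∑ i, a i := by simp [mul_sum]
    rw [psiNorm, psiNorm, hsum]
    simp only [Pi.smul_apply, smul_eq_mul, mul_div_mul_left _ _ hc.ne']
    ring

lemma psiNorm_add_le (hψ : ConvexOn ℝ (stdSimplex ℝ ι) ψ) {x y : ι → ℝ} (hx : 0 ≤ x)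
    (hy : 0 ≤ y) : psiNorm ψ (x + y) ≤ psiNorm ψ x + psiNorm ψ y := by
  rcases (Fintype.sum_nonneg hx).eq_or_lt with hSx | hSx
  · obtain rfl := (Fintype.sum_eq_zero_iff_of_nonneg hx).1 hSx.symm
    simp [psiNorm]
  rcases (Fintype.sum_nonneg hy).eq_or_lt with hSy | hSy
  · obtain rfl := (Fintype.sum_eq_zero_iff_of_nonneg hy).1 hSy.symm
    simp [psiNorm]
  set Sx := ∑ i, x i
  set Sy := ∑ i, y i
  have hsum : ∑ i, (x + y) i = Sx + Sy := sum_add_distrib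
  have hcomb : (fun i => (x + y) i / (Sx + Sy)) =
      (Sx / (Sx + Sy)) • (fun i => x i / Sx) + (Sy / (Sx + Sy)) • (fun i => y i / Sy) := by
    funext i
    simp only [Pi.add_apply, Pi.smul_apply, smul_eq_mul]
    field_simp
  have hjensen := hψ.2 (div_sum_mem_stdSimplex hx hSx.ne') (div_sum_mem_stdSimplex hy hSy.ne')
    (by positivity : 0 ≤ Sx / (Sx + Sy)) (by positivity : 0 ≤ Sy / (Sx + Sy)) (by field_simp)
  rw [← hcomb, smul_eq_mul, smul_eq_mul] at hjensen
  calc psiNorm ψ (x + y) = (Sx + Sy) * ψ (fun i => (x + y) i / (Sx + Sy)) := by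
        rw [psiNorm, hsum]
    _ ≤ (Sx + Sy) * (Sx / (Sx + Sy) * ψ (fun i => x i / Sx) +
          Sy / (Sx + Sy) * ψ (fun i => y i / Sy)) := by gcongr
    _ = Sx * ψ (fun i => x i / Sx) + Sy * ψ (fun i => y i / Sy) := by field_simp
    _ = psiNorm ψ x + psiNorm ψ y := rfl

lemma continuousOn_psiNorm (hψ : ContinuousOn ψ (stdSimplex ℝ ι)) :
    ContinuousOn (psiNorm ψ) (Set.Ici 0) := by
  intro a ha
  have hS : Continuous fun b : ι → ℝ => ∑ i, b i :=
    continuous_finsetSum _ fun i _ => continuous_apply i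
  rcases (Fintype.sum_nonneg ha).eq_or_lt with hzero | hpos
  · obtain ⟨M, hM⟩ := (isCompact_stdSimplex ℝ ι).exists_bound_of_continuousOn hψ
    have hbound : ∀ b ∈ Set.Ici (0 : ι → ℝ), ‖psiNorm ψ b‖ ≤ M * ∑ i, b i := by
      intro b hb
      rcases (Fintype.sum_nonneg hb).eq_or_lt with hb0 | hb0
      · simp [psiNorm, ← hb0]
      · rw [psiNorm, norm_mul, Real.norm_of_nonneg hb0.le, mul_comm]
        exact mul_le_mul_of_nonneg_right (hM _ (div_sum_mem_stdSimplex hb hb0.ne')) hb0.le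
    have hlim : Filter.Tendsto (fun b : ι → ℝ => M * ∑ i, b i) (nhdsWithin a (Set.Ici 0))
        (nhds 0) := by
      have h : ContinuousWithinAt (fun b : ι → ℝ => M * ∑ i, b i) (Set.Ici 0) a :=
        (continuous_const.mul hS).continuousWithinAt
      rwa [ContinuousWithinAt, ← hzero, mul_zero] at h
    have ha0 : psiNorm ψ a = 0 := by simp [psiNorm, ← hzero]
    rw [ContinuousWithinAt, ha0]
    exact squeeze_zero_norm' (eventually_nhdsWithin_of_forall hbound) hlim
  · have hnorm : ContinuousAt (fun b : ι → ℝ => fun i => b i / ∑ j, b j) a :=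
      continuousAt_pi.2 fun i => (continuous_apply i).continuousAt.div hS.continuousAt hpos.ne'
    have hmaps : Set.MapsTo (fun b : ι → ℝ => fun i => b i / ∑ j, b j)
        (Set.Ici 0 ∩ {b | ∑ i, b i ≠ 0}) (stdSimplex ℝ ι) :=
      fun b hb => div_sum_mem_stdSimplex hb.1 hb.2
    refine (continuousWithinAt_inter ((isOpen_ne_fun hS continuous_const).mem_nhds
      hpos.ne')).1 ?_
    exact hS.continuousWithinAt.mul
      ((hψ _ (div_sum_mem_stdSimplex ha hpos.ne')).comp hnorm.continuousWithinAt hmaps)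

end PsiNorm

lemma prodNorm_eq_psiNorm {X : Type*} [NormedAddCommGroup X] {n : ℕ} (ψ : (Fin n → ℝ) → ℝ)
    (x : Fin n → X) : prodNorm ψ x = psiNorm ψ (fun i => ‖x i‖) := by
  unfold prodNorm
  split_ifs with h
  · simp [psiNorm, h]
  · rfl

section PsiClass

variable {n : ℕ} {ψ : (Fin n → ℝ) → ℝ}

lemma psiNorm_single (hψ : PsiClass n ψ) (i : Fin n) {s : ℝ} (hs : 0 ≤ s) :
    psiNorm ψ (Pi.single i s) = s := by
  have hvertex : (fun j => if j = i then (1 : ℝ) else 0) = Pi.single i 1 :=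
    funext fun j => (Pi.single_apply i 1 j).symm
  have h1 : psiNorm ψ (Pi.single i (1 : ℝ)) = 1 := by
    simp [psiNorm, ← hvertex, hψ.2.2.1 i]
  rw [← mul_one s, ← smul_eq_mul, Pi.single_smul', psiNorm_smul hs, h1, smul_eq_mul]

lemma psiNorm_update_zero_le (hψ : PsiClass n ψ) {x : Fin n → ℝ} (hx : 0 ≤ x) (i : Fin n) :
    psiNorm ψ (Function.update x i 0) ≤ psiNorm ψ x := by
  set S := ∑ j, x j
  have hsum : ∑ j, Function.update x i 0 j = S - x i := by
    rw [sum_update_of_mem (mem_univ i), sum_sdiff_eq_sub (subset_univ _), sum_singleton,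
      zero_add]
  rcases (single_le_sum (fun j _ => hx j) (mem_univ i) : x i ≤ S).lt_or_eq with hlt | heq
  · have hS : 0 < S := (hx i).trans_lt hlt
    have ht := div_sum_mem_stdSimplex hx hS.ne'
    have hti : x i / S < 1 := (div_lt_one hS).2 hlt
    have hrenorm := hψ.2.2.2 _ ht i hti
    have hscale : S - x i = S * (1 - x i / S) := by field_simp
    have harg : (fun j => Function.update x i 0 j / (S - x i)) =
        fun j => if j = i then 0 else x j / S / (1 - x i / S) := by
      funext j
      by_cases hj : j = i
      · simp [hj]
      · rw [Function.update_of_ne hj, if_neg hj, div_div, hscale]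
    calc psiNorm ψ (Function.update x i 0)
        = S * ((1 - x i / S) * ψ (fun j => if j = i then 0 else x j / S / (1 - x i / S))) := by
          rw [psiNorm, hsum, harg, hscale, mul_assoc]
      _ ≤ S * ψ (fun j => x j / S) := by gcongr
  · have hzero : Function.update x i 0 = 0 := by
      refine (Fintype.sum_eq_zero_iff_of_nonneg fun j => ?_).1 (by rw [hsum, heq, sub_self])
      rcases eq_or_ne j i with rfl | hj
      · simp
      · simpa [Function.update_of_ne hj] using hx j
    have hsingle : x = Pi.single i (x i) := by
      conv_lhs => rw [← Function.update_eq_self i x, ← Function.update_idem (a := i) (v := 0),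
        hzero]
      rfl
    rw [hzero, hsingle, psiNorm_single hψ i (hx i)]
    simpa [psiNorm] using hx i

lemma psiNorm_update_le_update (hψ : PsiClass n ψ) {x : Fin n → ℝ} (hx : 0 ≤ x) (i : Fin n)
    {s s' : ℝ} (hs : 0 ≤ s) (hss : s ≤ s') :
    psiNorm ψ (Function.update x i s) ≤ psiNorm ψ (Function.update x i s') := by
  rcases (hs.trans hss).eq_or_lt with hs' | hs'
  · rw [le_antisymm hss (hs'.symm ▸ hs), ← hs']
  set z := Function.update x i 0
  set w := Function.update x i s'
  have hnonneg : ∀ r, 0 ≤ r → 0 ≤ Function.update x i r := fun r hr j => by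
    rcases eq_or_ne j i with rfl | hj
    · simpa using hr
    · simpa [Function.update_of_ne hj] using hx j
  have hzw : psiNorm ψ z ≤ psiNorm ψ w := by
    simpa [z, w] using psiNorm_update_zero_le hψ (hnonneg s' hs'.le) i
  set θ := s / s'
  have hθ : θ ≤ 1 := (div_le_one hs').2 hss
  have hcomb : Function.update x i s = (1 - θ) • z + θ • w := by
    funext j
    rcases eq_or_ne j i with rfl | hj
    · simp [z, w, θ, hs'.ne']
    · simp [z, w, Function.update_of_ne hj]
      ring
  calc psiNorm ψ (Function.update x i s)
      ≤ psiNorm ψ ((1 - θ) • z) + psiNorm ψ (θ • w) := by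
        rw [hcomb]
        exact psiNorm_add_le hψ.2.1 (smul_nonneg (by linarith) (hnonneg 0 le_rfl))
          (smul_nonneg (by positivity) (hnonneg s' hs'.le))
    _ = (1 - θ) * psiNorm ψ z + θ * psiNorm ψ w := by
        rw [psiNorm_smul (by linarith), psiNorm_smul (by positivity)]
    _ ≤ (1 - θ) * psiNorm ψ w + θ * psiNorm ψ w := by gcongr
    _ = psiNorm ψ w := by ring

lemma psiNorm_mono (hψ : PsiClass n ψ) {a b : Fin n → ℝ} (ha : 0 ≤ a) (hab : a ≤ b) :
    psiNorm ψ a ≤ psiNorm ψ b := by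
  classical
  suffices h : ∀ s : Finset (Fin n), psiNorm ψ (s.piecewise a b) ≤ psiNorm ψ b by
    simpa using h univ
  intro s
  induction s using Finset.induction_on with
  | empty => simp
  | insert i s hi ih =>
    calc psiNorm ψ ((insert i s).piecewise a b)
        = psiNorm ψ (Function.update (s.piecewise a b) i (a i)) := by rw [piecewise_insert]
      _ ≤ psiNorm ψ (Function.update (s.piecewise a b) i (b i)) :=
          psiNorm_update_le_update hψ (s.le_piecewise_of_le_of_le ha (ha.trans hab)) i (ha i)
            (hab i)
      _ = psiNorm ψ (s.piecewise a b) := by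
          rw [← s.piecewise_eq_of_notMem a b hi, Function.update_eq_self]
      _ ≤ psiNorm ψ b := ih

lemma le_psiNorm (hψ : PsiClass n ψ) {a : Fin n → ℝ} (ha : 0 ≤ a) (i : Fin n) :
    a i ≤ psiNorm ψ a := by
  have hle : Pi.single i (a i) ≤ a := fun j => by
    rcases eq_or_ne j i with rfl | hj
    · simp
    · simpa [hj] using ha j
  simpa [psiNorm_single hψ i (ha i)] using
    psiNorm_mono hψ (Pi.single_nonneg.2 (ha i)) hle

lemma psiNorm_lt_psiNorm [Nonempty (Fin n)] (hψ : PsiClass n ψ) {a b : Fin n → ℝ} (ha : 0 ≤ a)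
    (hab : ∀ i, a i < b i) : psiNorm ψ a < psiNorm ψ b := by
  have hb : ∀ i, 0 < b i := fun i => (ha i).trans_lt (hab i)
  obtain ⟨k, hk⟩ := Finite.exists_max fun i => a i / b i
  have har : a ≤ (a k / b k) • b := fun i => by
    simpa [← div_le_iff₀ (hb i)] using hk i
  calc psiNorm ψ a ≤ psiNorm ψ ((a k / b k) • b) := psiNorm_mono hψ ha har
    _ = a k / b k * psiNorm ψ b := psiNorm_smul (div_nonneg (ha k) (hb k).le) b
    _ < psiNorm ψ b :=
        mul_lt_of_lt_one_left ((hb k).trans_le (le_psiNorm hψ (fun i => (hb i).le) k))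
          ((div_lt_one (hb k)).2 (hab k))

end PsiClass

theorem exists_mem_forall_norm_sub_lt_of_notMem {F : Type*} [NormedAddCommGroup F]
    [InnerProductSpace ℝ F] {K : Set F} (hne : K.Nonempty) (hc : IsComplete K)
    (hK : Convex ℝ K) {w : F} (hw : w ∉ K) : ∃ p ∈ K, ∀ y ∈ K, ‖p - y‖ < ‖w - y‖ := by
  obtain ⟨p, hpK, hp⟩ := exists_norm_eq_iInf_of_complete_convex hne hc hK w
  refine ⟨p, hpK, fun y hy => ?_⟩
  have hobtuse : inner ℝ (w - p) (y - p) ≤ 0 :=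
    (norm_eq_iInf_iff_real_inner_le_zero hK hpK).1 hp y hy
  have hwp : 0 < ‖w - p‖ := norm_pos_iff.2 (sub_ne_zero.2 fun h => hw (h ▸ hpK))
  have hexpand : ‖w - y‖ ^ 2 = ‖w - p‖ ^ 2 - 2 * inner ℝ (w - p) (y - p) + ‖p - y‖ ^ 2 := by
    rw [norm_sub_rev p y, ← norm_sub_sq_real, sub_sub_sub_cancel_right]
  exact lt_of_pow_lt_pow_left₀ 2 (norm_nonneg _) (by nlinarith)

theorem stmt_16_general {X : Type*} [NormedAddCommGroup X] [InnerProductSpace ℝ X]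
    (n : ℕ) (hn : 2 ≤ n) (ψ : (Fin n → ℝ) → ℝ) (hψ : PsiClass n ψ)
    (v : Fin n → X) :
    {u : X | ∀ w : X,
        prodNorm ψ (fun i => u - v i) ≤ prodNorm ψ (fun i => w - v i)}.Nonempty ∧
      {u : X | ∀ w : X,
          prodNorm ψ (fun i => u - v i) ≤ prodNorm ψ (fun i => w - v i)} ⊆
        convexHull ℝ (Set.range v) := by
  have : Nonempty (Fin n) := ⟨⟨0, by omega⟩⟩
  set K := convexHull ℝ (Set.range v)
  have hK : IsCompact K := (Set.finite_range v).isCompact_convexHull (𝕜 := ℝ)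
  have hKne : K.Nonempty := (Set.range_nonempty v).convexHull
  set f : X → ℝ := fun u => psiNorm ψ (fun i => ‖u - v i‖)
  simp only [prodNorm_eq_psiNorm]
  have hf : Continuous f := continuousOn_psiNorm hψ.1 |>.comp_continuous
    (continuous_pi fun i => (continuous_id.sub continuous_const).norm) fun u i => norm_nonneg _
  have hcloser : ∀ w ∉ K, ∃ p ∈ K, f p < f w := fun w hw => by
    obtain ⟨p, hpK, hp⟩ :=
      exists_mem_forall_norm_sub_lt_of_notMem hKne hK.isComplete (convex_convexHull ℝ _) hw
    exact ⟨p, hpK, psiNorm_lt_psiNorm hψ (fun i => norm_nonneg _)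
      fun i => hp _ (subset_convexHull ℝ _ ⟨i, rfl⟩)⟩
  obtain ⟨u₀, -, hu₀⟩ := hK.exists_isMinOn hKne hf.continuousOn
  refine ⟨⟨u₀, fun w => ?_⟩, fun u hu => ?_⟩
  · by_cases hw : w ∈ K
    · exact hu₀ hw
    · obtain ⟨p, hpK, hp⟩ := hcloser w hw
      exact (hu₀ hpK).trans hp.le
  · by_contra hu'
    obtain ⟨p, -, hp⟩ := hcloser u hu'
    exact (hu p).not_gt hp

theorem stmt_16 {X : Type*} [NormedAddCommGroup X] [InnerProductSpace ℝ X]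
    [CompleteSpace X]
    (n : ℕ) (hn : 2 ≤ n) (ψ : (Fin n → ℝ) → ℝ) (hψ : PsiClass n ψ)
    (v : Fin n → X) (hv : Function.Injective v) :
    {u : X | ∀ w : X,
        prodNorm ψ (fun i => u - v i) ≤ prodNorm ψ (fun i => w - v i)}.Nonempty ∧
      {u : X | ∀ w : X,
          prodNorm ψ (fun i => u - v i) ≤ prodNorm ψ (fun i => w - v i)} ⊆
        convexHull ℝ (Set.range v) :=
  stmt_16_general n hn ψ hψ v
end

section
/- (p-Fermat–Torricelli problem.) Let (X,‖·‖) be a real normed space, n ≥ 2, v_1,…,v_n ∈ X distinct, p ∈ (1,∞), and q ∈ (1,∞) with 1/p + 1/q = 1. Define f(u) := (Σ_{i=1}^n ‖u − v_i‖^p)^{1/p} for u ∈ X. Then: (a) ū ∈ X is a global minimizer of f if and only if there exist x*_1,…,x*_n ∈ X* such that Σ_{i=1}^n x*_i = 0, Σ_{i=1}^n ‖x*_i‖*^q = 1, and for every i = 1,…,n: ⟨x*_i, ū − v_i⟩ = ‖x*_i‖*·‖ū − v_i‖ and ‖x*_i‖*^q = ‖ū − v_i‖^p / (Σ_{j=1}^n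 ‖ū − v_j‖^p). (b) If x*_1,…,x*_n are as in (a), then the set of all global minimizers of f equals ∩_{i=1}^n ({u ∈ X : ⟨x*_i, u − v_i⟩ = ‖x*_i‖*·‖u − v_i‖} ∩ {u ∈ X : ‖x*_i‖*^q = ‖u − v_i‖^p / (Σ_{j=1}^n ‖u − v_j‖^p)}). -/
/-!
A point `ub` minimizes `f` iff it minimizes `S u = ∑ i, ‖u - v i‖ ^ p`. For a minimizer, the
right derivative of `t ↦ S (ub + t • h)` at `0` is nonnegative in every direction `h`, which is a
sublinear condition on `h` built from the one-sided directional derivatives of the norm at the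
points `ub - v i`. Hahn–Banach, applied on `X ^ n` to the zero functional on the diagonal, splits
this into functionals `x*_i` summing to zero and aligned with `ub - v i`; normalizing gives (a).

Conversely, if `∑ x*_i = 0` and `∑ ‖x*_i‖ ^ q = 1`, then `∑ x*_i (u - v i)` does not depend on `u`
and, by Hölder, is at most `f u`. The conditions in (a) at `u` are exactly the equality cases of
`x*_i (u - v i) ≤ ‖x*_i‖ ‖u - v i‖` and of Hölder's inequality (via Young's), so they hold iff
`f u` attains this common lower bound, which gives both the converse in (a) and (b).
-/

open Set

section NormRightDeriv

variable {E : Type*} [SeminormedAddCommGroup E] [NormedSpace ℝ E]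

noncomputable def normRightDeriv (x h : E) : ℝ :=
  derivWithin (fun t : ℝ => ‖x + t • h‖) (Ioi 0) 0

lemma HasDerivWithinAt.nonneg_of_forall_Ioi_le {f : ℝ → ℝ} {f' a : ℝ}
    (hf : HasDerivWithinAt f f' (Ioi a) a) (hmin : ∀ t ∈ Ioi a, f a ≤ f t) : 0 ≤ f' := by
  refine ge_of_tendsto ((hasDerivWithinAt_iff_tendsto_slope' self_notMem_Ioi).1 hf) ?_
  filter_upwards [self_mem_nhdsWithin] with t ht
  rw [slope_def_field]
  exact div_nonneg (sub_nonneg.2 (hmin t ht)) (sub_pos.2 ht).le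

lemma convexOn_norm_add_smul (x h : E) : ConvexOn ℝ univ fun t : ℝ => ‖x + t • h‖ := by
  refine ⟨convex_univ, fun s _ t _ a b ha hb hab => ?_⟩
  calc ‖x + (a • s + b • t) • h‖ = ‖a • (x + s • h) + b • (x + t • h)‖ := by
        congr 1; linear_combination (norm := module) -(hab • x)
    _ ≤ ‖a • (x + s • h)‖ + ‖b • (x + t • h)‖ := norm_add_le _ _
    _ = _ := by rw [norm_smul_of_nonneg ha, norm_smul_of_nonneg hb]; rfl

lemma hasDerivWithinAt_normRightDeriv (x h : E) :
    HasDerivWithinAt (fun t : ℝ => ‖x + t • h‖) (normRightDeriv x h) (Ioi 0) 0 :=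
  (convexOn_norm_add_smul x h).hasDerivWithinAt_rightDeriv_of_mem_interior (by simp)

lemma normRightDeriv_le_slope (x h : E) {t : ℝ} (ht : 0 < t) :
    normRightDeriv x h ≤ (‖x + t • h‖ - ‖x‖) / t := by
  simpa [normRightDeriv, slope_def_field] using
    (convexOn_norm_add_smul x h).rightDeriv_le_slope_of_mem_interior (by simp) (mem_univ t) ht

lemma normRightDeriv_le_norm (x h : E) : normRightDeriv x h ≤ ‖h‖ := by
  have := normRightDeriv_le_slope x h one_pos
  rw [one_smul, div_one] at this
  linarith [norm_add_le x h]

lemma normRightDeriv_neg_self_le (x : E) : normRightDeriv x (-x) ≤ -‖x‖ := by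
  simpa using normRightDeriv_le_slope x (-x) one_pos

lemma normRightDeriv_zero (x : E) : normRightDeriv x 0 = 0 := by
  simp [normRightDeriv]

lemma normRightDeriv_smul (x h : E) {c : ℝ} (hc : 0 < c) :
    normRightDeriv x (c • h) = c * normRightDeriv x h := by
  have hcomp := (hasDerivWithinAt_normRightDeriv x h).comp_of_eq (0 : ℝ)
    ((hasDerivAt_id (0 : ℝ)).const_mul c).hasDerivWithinAt
    (fun t (ht : t ∈ Ioi 0) => mul_pos hc ht) (by simp)
  rw [mul_comm]
  simpa [normRightDeriv, Function.comp_def, mul_smul, smul_comm c] using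
    hcomp.derivWithin (uniqueDiffWithinAt_Ioi 0)

lemma normRightDeriv_add_le (x h₁ h₂ : E) :
    normRightDeriv x (h₁ + h₂) ≤ normRightDeriv x h₁ + normRightDeriv x h₂ := by
  -- both sides of `hconv` agree at `t = 0`, so their right derivatives there are ordered
  have hconv : ∀ t : ℝ,
      ‖x + t • (h₁ + h₂)‖ ≤ (‖x + t • ((2 : ℝ) • h₁)‖ + ‖x + t • ((2 : ℝ) • h₂)‖) / 2 := by
    intro t
    have h2 : (2 : ℝ) • (x + t • (h₁ + h₂)) =
        x + t • ((2 : ℝ) • h₁) + (x + t • ((2 : ℝ) • h₂)) := by module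
    have := norm_add_le (x + t • ((2 : ℝ) • h₁)) (x + t • ((2 : ℝ) • h₂))
    rw [← h2, norm_smul_of_nonneg zero_le_two] at this
    linarith
  have hderiv := (((hasDerivWithinAt_normRightDeriv x ((2 : ℝ) • h₁)).add
    (hasDerivWithinAt_normRightDeriv x ((2 : ℝ) • h₂))).div_const 2).sub
    (hasDerivWithinAt_normRightDeriv x (h₁ + h₂))
  have := hderiv.nonneg_of_forall_Ioi_le fun t _ => by simpa using hconv t
  rw [normRightDeriv_smul x h₁ two_pos, normRightDeriv_smul x h₂ two_pos] at this
  linarith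

lemma sum_rpow_mul_normRightDeriv_nonneg {ι : Type*} [Fintype ι] {p : ℝ} (hp : 1 ≤ p)
    (x : ι → E) (hmin : ∀ h : E, ∑ i, ‖x i‖ ^ p ≤ ∑ i, ‖x i + h‖ ^ p) (h : E) :
    0 ≤ ∑ i, ‖x i‖ ^ (p - 1) * normRightDeriv (x i) h := by
  have hderiv : HasDerivWithinAt (fun t : ℝ => ∑ i, ‖x i + t • h‖ ^ p)
      (∑ i, normRightDeriv (x i) h * p * ‖x i + (0 : ℝ) • h‖ ^ (p - 1)) (Ioi 0) 0 :=
    HasDerivWithinAt.fun_sum fun i _ =>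
      (hasDerivWithinAt_normRightDeriv (x i) h).rpow_const (.inr hp)
  have := hderiv.nonneg_of_forall_Ioi_le fun t _ => by simpa using hmin (t • h)
  simp only [zero_smul, add_zero] at this
  have hsum : ∑ i, normRightDeriv (x i) h * p * ‖x i‖ ^ (p - 1)
      = p * ∑ i, ‖x i‖ ^ (p - 1) * normRightDeriv (x i) h := by
    rw [Finset.mul_sum]; congr 1; ext i; ring
  rw [hsum] at this
  exact nonneg_of_mul_nonneg_right this (by linarith)

lemma abs_le_mul_norm_of_le_normRightDeriv {ℓ : E →ₗ[ℝ] ℝ} {x : E} {c : ℝ} (hc : 0 ≤ c)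
    (hℓ : ∀ h, ℓ h ≤ c * normRightDeriv x h) (h : E) : |ℓ h| ≤ c * ‖h‖ := by
  have hle : ∀ h, ℓ h ≤ c * ‖h‖ := fun h =>
    (hℓ h).trans (mul_le_mul_of_nonneg_left (normRightDeriv_le_norm x h) hc)
  have := hle (-h)
  rw [map_neg, norm_neg] at this
  exact abs_le.2 ⟨by linarith, hle h⟩

lemma eq_mul_norm_of_le_normRightDeriv {ℓ : E →ₗ[ℝ] ℝ} {x : E} {c : ℝ} (hc : 0 ≤ c)
    (hℓ : ∀ h, ℓ h ≤ c * normRightDeriv x h) : ℓ x = c * ‖x‖ := by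
  have hupper := (hℓ x).trans (mul_le_mul_of_nonneg_left (normRightDeriv_le_norm x x) hc)
  have hlower := (hℓ (-x)).trans (mul_le_mul_of_nonneg_left (normRightDeriv_neg_self_le x) hc)
  rw [map_neg] at hlower
  linarith

theorem exists_sum_eq_zero_of_normRightDeriv {ι : Type*} [Fintype ι] (x : ι → E) {c : ι → ℝ}
    (hc : ∀ i, 0 ≤ c i) (hx : ∀ h, 0 ≤ ∑ i, c i * normRightDeriv (x i) h) :
    ∃ G : ι → E →L[ℝ] ℝ, ∑ i, G i = 0 ∧ ∀ i, ‖G i‖ ≤ c i ∧ G i (x i) = c i * ‖x i‖ := by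
  classical
  let Ψ : (ι → E) → ℝ := fun w => ∑ i, c i * normRightDeriv (x i) (w i)
  have Ψ_smul : ∀ r : ℝ, 0 < r → ∀ w, Ψ (r • w) = r * Ψ w := fun r hr w => by
    simp only [Ψ, Pi.smul_apply, normRightDeriv_smul _ _ hr, Finset.mul_sum]
    exact Finset.sum_congr rfl fun i _ => by ring
  have Ψ_add : ∀ w₁ w₂, Ψ (w₁ + w₂) ≤ Ψ w₁ + Ψ w₂ := fun w₁ w₂ => by
    simp only [Ψ, ← Finset.sum_add_distrib, ← mul_add]
    exact Finset.sum_le_sum fun i _ =>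
      mul_le_mul_of_nonneg_left (normRightDeriv_add_le _ _ _) (hc i)
  let diagonal : Submodule ℝ (ι → E) := LinearMap.range (LinearMap.pi fun _ => LinearMap.id)
  obtain ⟨g, hg_diag, hgΨ⟩ := exists_extension_of_le_sublinear ⟨diagonal, 0⟩ Ψ Ψ_smul Ψ_add <| by
    rintro ⟨_, h, rfl⟩
    simpa [Ψ] using hx h
  have hg : ∀ i h, g (Pi.single i h) ≤ c i * normRightDeriv (x i) h := fun i h => by
    simpa [Ψ, Pi.single_apply, apply_ite, normRightDeriv_zero] using hgΨ (Pi.single i h)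
  let G : ι → E →L[ℝ] ℝ := fun i => (g.comp (LinearMap.single ℝ (fun _ => E) i)).mkContinuous
    (c i) fun h => abs_le_mul_norm_of_le_normRightDeriv (hc i) (hg i) h
  refine ⟨G, ?_, fun i => ⟨LinearMap.mkContinuous_norm_le _ (hc i) _,
    eq_mul_norm_of_le_normRightDeriv (hc i) (hg i)⟩⟩
  ext h
  have : g (fun _ => h) = 0 := hg_diag ⟨_, h, rfl⟩
  simpa [G, ← map_sum, Finset.univ_sum_single] using this

end NormRightDeriv

section Holder

variable {ι : Type*} [Fintype ι] {p q : ℝ} {a b : ι → ℝ}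

lemma sum_mul_le_of_sum_rpow_eq_one (hpq : p.HolderConjugate q) (ha : ∀ i, 0 ≤ a i)
    (hb : ∀ i, 0 ≤ b i) (h1 : ∑ i, a i ^ q = 1) :
    ∑ i, a i * b i ≤ (∑ i, b i ^ p) ^ (1 / p) := by
  simpa [h1] using
    Real.inner_le_Lp_mul_Lq_of_nonneg Finset.univ hpq.symm (fun i _ => ha i) (fun i _ => hb i)

lemma sum_mul_eq_iff_of_sum_rpow_eq_one (hpq : p.HolderConjugate q) (ha : ∀ i, 0 ≤ a i)
    (hb : ∀ i, 0 ≤ b i) (h1 : ∑ i, a i ^ q = 1) (hB : 0 < ∑ i, b i ^ p) :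
    ∑ i, a i * b i = (∑ i, b i ^ p) ^ (1 / p) ↔ ∀ i, a i ^ q = b i ^ p / ∑ j, b j ^ p := by
  set B := ∑ i, b i ^ p
  set T := B ^ (1 / p)
  have hT : 0 < T := by positivity
  have hTp : T ^ p = B := by
    rw [← Real.rpow_mul hB.le, one_div_mul_cancel hpq.ne_zero, Real.rpow_one]
  have hβ : ∀ i, 0 ≤ b i / T := fun i => div_nonneg (hb i) hT.le
  have hβp : ∀ i, (b i / T) ^ p = b i ^ p / B := fun i => by
    rw [Real.div_rpow (hb i) hT.le, hTp]
  have hyoung : ∀ i ∈ Finset.univ, a i * (b i / T) ≤ a i ^ q / q + (b i / T) ^ p / p :=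
    fun i _ => Real.young_inequality_of_nonneg (ha i) (hβ i) hpq.symm
  have hβsum : ∑ i, (b i / T) ^ p = 1 := by
    rw [Finset.sum_congr rfl fun i _ => hβp i, ← Finset.sum_div]
    exact div_self hB.ne'
  have hsum : ∑ i, (a i ^ q / q + (b i / T) ^ p / p) = 1 := by
    rw [Finset.sum_add_distrib, ← Finset.sum_div, ← Finset.sum_div, h1, hβsum, one_div, one_div,
      add_comm, hpq.inv_add_inv_eq_one]
  calc ∑ i, a i * b i = T ↔ ∑ i, a i * (b i / T) = ∑ i, (a i ^ q / q + (b i / T) ^ p / p) := by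
        simp_rw [hsum, ← mul_div_assoc, ← Finset.sum_div, div_eq_one_iff_eq hT.ne']
    _ ↔ ∀ i, a i ^ q = b i ^ p / B := by
        simp only [Finset.sum_eq_sum_iff_of_le hyoung, Finset.mem_univ, true_implies]
        refine forall_congr' fun i => ?_
        rw [Real.young_inequality_eq_iff_of_nonneg (ha i) (hβ i) hpq.symm, hβp]

end Holder

section Duality

variable {E : Type*} [SeminormedAddCommGroup E] [NormedSpace ℝ E] {ι : Type*} [Fintype ι]
  (v : ι → E) {p q : ℝ} {xs : ι → E →L[ℝ] ℝ}

lemma sum_apply_sub_eq_of_sum_eq_zero (hsum : ∑ i, xs i = 0) (u w : E) :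
    ∑ i, xs i (u - v i) = ∑ i, xs i (w - v i) := by
  have : ∑ i, xs i (u - w) = 0 := by
    simpa using congrArg (fun G : E →L[ℝ] ℝ => G (u - w)) hsum
  rw [← sub_eq_zero, ← Finset.sum_sub_distrib, ← this]
  exact Finset.sum_congr rfl fun i _ => by rw [← map_sub, sub_sub_sub_cancel_right]

lemma sum_apply_sub_le_sum_norm_mul (u : E) :
    ∑ i, xs i (u - v i) ≤ ∑ i, ‖xs i‖ * ‖u - v i‖ :=
  Finset.sum_le_sum fun i _ => (Real.le_norm_self _).trans ((xs i).le_opNorm _)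

lemma sum_apply_sub_le (hpq : p.HolderConjugate q) (hnorm : ∑ i, ‖xs i‖ ^ q = 1) (u : E) :
    ∑ i, xs i (u - v i) ≤ (∑ i, ‖u - v i‖ ^ p) ^ (1 / p) :=
  (sum_apply_sub_le_sum_norm_mul v u).trans <|
    sum_mul_le_of_sum_rpow_eq_one hpq (fun _ => norm_nonneg _) (fun _ => norm_nonneg _) hnorm

lemma sum_apply_sub_eq_iff (hpq : p.HolderConjugate q) (hnorm : ∑ i, ‖xs i‖ ^ q = 1) {u : E}
    (hS : 0 < ∑ i, ‖u - v i‖ ^ p) :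
    ∑ i, xs i (u - v i) = (∑ i, ‖u - v i‖ ^ p) ^ (1 / p) ↔
      ∀ i, xs i (u - v i) = ‖xs i‖ * ‖u - v i‖ ∧
        ‖xs i‖ ^ q = ‖u - v i‖ ^ p / ∑ j, ‖u - v j‖ ^ p := by
  have hAB := sum_apply_sub_le_sum_norm_mul (xs := xs) v u
  have hBC := sum_mul_le_of_sum_rpow_eq_one hpq (fun i => norm_nonneg (xs i))
    (fun i => norm_nonneg (u - v i)) hnorm
  rw [forall_and, ← sum_mul_eq_iff_of_sum_rpow_eq_one hpq (fun i => norm_nonneg (xs i))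
    (fun i => norm_nonneg (u - v i)) hnorm hS]
  have htermwise := Finset.sum_eq_sum_iff_of_le (s := Finset.univ)
    fun i _ => (Real.le_norm_self (xs i (u - v i))).trans ((xs i).le_opNorm (u - v i))
  simp only [Finset.mem_univ, true_implies] at htermwise
  rw [← htermwise]
  exact ⟨fun h => ⟨by linarith, by linarith⟩, fun ⟨h₁, h₂⟩ => h₁.trans h₂⟩

lemma le_of_sum_apply_sub_eq (hpq : p.HolderConjugate q) (hsum : ∑ i, xs i = 0)
    (hnorm : ∑ i, ‖xs i‖ ^ q = 1) {u : E}
    (hu : ∑ i, xs i (u - v i) = (∑ i, ‖u - v i‖ ^ p) ^ (1 / p)) (w : E) :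
    (∑ i, ‖u - v i‖ ^ p) ^ (1 / p) ≤ (∑ i, ‖w - v i‖ ^ p) ^ (1 / p) := by
  rw [← hu, sum_apply_sub_eq_of_sum_eq_zero v hsum u w]
  exact sum_apply_sub_le v hpq hnorm w

theorem exists_dual_of_forall_le (hpq : p.HolderConjugate q) {ub : E}
    (hS : 0 < ∑ i, ‖ub - v i‖ ^ p) (hmin : ∀ u, ∑ i, ‖ub - v i‖ ^ p ≤ ∑ i, ‖u - v i‖ ^ p) :
    ∃ xs : ι → E →L[ℝ] ℝ, ∑ i, xs i = 0 ∧ ∑ i, ‖xs i‖ ^ q = 1 ∧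
      ∀ i, xs i (ub - v i) = ‖xs i‖ * ‖ub - v i‖ ∧
        ‖xs i‖ ^ q = ‖ub - v i‖ ^ p / ∑ j, ‖ub - v j‖ ^ p := by
  set S := ∑ i, ‖ub - v i‖ ^ p
  set x : ι → E := fun i => ub - v i
  -- the weights are forced by the condition on `‖xs i‖ ^ q`
  set c : ι → ℝ := fun i => (‖x i‖ ^ p / S) ^ q⁻¹
  have hc : ∀ i, 0 ≤ c i := fun i => by positivity
  have hcq : ∀ i, c i ^ q = ‖x i‖ ^ p / S := fun i =>
    Real.rpow_inv_rpow (by positivity) hpq.symm.ne_zero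
  have hc_eq : ∀ i, c i = ‖x i‖ ^ (p - 1) / S ^ q⁻¹ := fun i => by
    rw [show c i = (‖x i‖ ^ p / S) ^ q⁻¹ from rfl, Real.div_rpow (by positivity) hS.le,
      ← Real.rpow_mul (norm_nonneg _), ← div_eq_mul_inv, hpq.div_conj_eq_sub_one]
  have hfirst := sum_rpow_mul_normRightDeriv_nonneg hpq.lt.le x fun h => by
    simpa [x, sub_add_eq_add_sub] using hmin (ub + h)
  obtain ⟨G, hG_sum, hG⟩ := exists_sum_eq_zero_of_normRightDeriv x hc fun h => by
    simp only [hc_eq, div_mul_eq_mul_div, ← Finset.sum_div]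
    exact div_nonneg (hfirst h) (by positivity)
  have hG_norm : ∀ i, ‖G i‖ = c i := fun i => by
    refine le_antisymm (hG i).1 ?_
    rcases (norm_nonneg (x i)).eq_or_lt with hx | hx
    · simp [c, ← hx, Real.zero_rpow hpq.ne_zero, Real.zero_rpow hpq.symm.inv_ne_zero]
    · have := (hG i).2 ▸ (Real.le_norm_self _).trans ((G i).le_opNorm (x i))
      exact le_of_mul_le_mul_right this hx
  refine ⟨G, hG_sum, ?_, fun i => ⟨?_, ?_⟩⟩
  · simp only [hG_norm, hcq, ← Finset.sum_div]
    exact div_self hS.ne'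
  · rw [hG_norm]
    exact (hG i).2
  · rw [hG_norm]
    exact hcq i

end Duality

lemma sum_norm_sub_rpow_pos {X : Type*} [NormedAddCommGroup X] {ι : Type*} [Fintype ι]
    [Nontrivial ι] {v : ι → X} (hv : Function.Injective v) (p : ℝ) (u : X) :
    0 < ∑ i, ‖u - v i‖ ^ p := by
  obtain ⟨i, hi⟩ : ∃ i, u ≠ v i := by
    obtain ⟨i, j, hij⟩ := exists_pair_ne ι
    by_contra! h
    exact hij (hv ((h i).symm.trans (h j)))
  exact Finset.sum_pos' (fun j _ => by positivity)
    ⟨i, Finset.mem_univ i, Real.rpow_pos_of_pos (norm_pos_iff.2 (sub_ne_zero.2 hi)) p⟩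

open Finset

theorem stmt_19_general {X : Type*} [NormedAddCommGroup X] [NormedSpace ℝ X]
    (n : ℕ) (hn : 2 ≤ n) (v : Fin n → X) (hv : Function.Injective v)
    (p q : ℝ) (hp : 1 < p) (hpq : 1 / p + 1 / q = 1) :
    (∀ ub : X,
      (∀ u : X, (∑ i, ‖ub - v i‖ ^ p) ^ (1 / p) ≤ (∑ i, ‖u - v i‖ ^ p) ^ (1 / p)) ↔
        ∃ xs : Fin n → (X →L[ℝ] ℝ),
          (∑ i, xs i) = 0 ∧ (∑ i, ‖xs i‖ ^ q) = 1 ∧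
          ∀ i, xs i (ub - v i) = ‖xs i‖ * ‖ub - v i‖ ∧
            ‖xs i‖ ^ q = ‖ub - v i‖ ^ p / ∑ j, ‖ub - v j‖ ^ p) ∧
    (∀ ub : X, ∀ xs : Fin n → (X →L[ℝ] ℝ),
      (∀ u : X, (∑ i, ‖ub - v i‖ ^ p) ^ (1 / p) ≤ (∑ i, ‖u - v i‖ ^ p) ^ (1 / p)) →
      (∑ i, xs i) = 0 → (∑ i, ‖xs i‖ ^ q) = 1 →
      (∀ i, xs i (ub - v i) = ‖xs i‖ * ‖ub - v i‖ ∧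
        ‖xs i‖ ^ q = ‖ub - v i‖ ^ p / ∑ j, ‖ub - v j‖ ^ p) →
      {u : X | ∀ w : X,
          (∑ i, ‖u - v i‖ ^ p) ^ (1 / p) ≤ (∑ i, ‖w - v i‖ ^ p) ^ (1 / p)} =
        ⋂ i, ({u : X | xs i (u - v i) = ‖xs i‖ * ‖u - v i‖} ∩
          {u : X | ‖xs i‖ ^ q = ‖u - v i‖ ^ p / ∑ j, ‖u - v j‖ ^ p})) := by
  have hpq' : p.HolderConjugate q := Real.holderConjugate_iff.2 ⟨hp, by simpa [one_div] using hpq⟩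
  have : Nontrivial (Fin n) := Fin.nontrivial_iff_two_le.2 hn
  have hS : ∀ u, 0 < ∑ i, ‖u - v i‖ ^ p := sum_norm_sub_rpow_pos hv p
  refine ⟨fun ub => ⟨fun hmin => ?_, fun ⟨xs, hsum, hnorm, hcert⟩ => ?_⟩,
    fun ub xs hmin hsum hnorm hcert => ?_⟩
  · refine exists_dual_of_forall_le v hpq' (hS ub) fun u => ?_
    exact (Real.rpow_le_rpow_iff (hS ub).le (hS u).le (by positivity)).1 (hmin u)
  · exact le_of_sum_apply_sub_eq v hpq' hsum hnorm
      ((sum_apply_sub_eq_iff v hpq' hnorm (hS ub)).2 hcert)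
  · have hub := (sum_apply_sub_eq_iff v hpq' hnorm (hS ub)).2 hcert
    ext u
    simp only [Set.mem_ofPred_eq, Set.mem_iInter, Set.mem_inter_iff]
    rw [← sum_apply_sub_eq_iff v hpq' hnorm (hS u)]
    refine ⟨fun hu => le_antisymm (sum_apply_sub_le v hpq' hnorm u) ?_,
      le_of_sum_apply_sub_eq v hpq' hsum hnorm⟩
    rw [sum_apply_sub_eq_of_sum_eq_zero v hsum u ub, hub]
    exact hu ub

theorem stmt_19 {X : Type*} [NormedAddCommGroup X] [NormedSpace ℝ X]
    (n : ℕ) (hn : 2 ≤ n) (v : Fin n → X) (hv : Function.Injective v)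
    (p q : ℝ) (hp : 1 < p) (hq : 1 < q) (hpq : 1 / p + 1 / q = 1) :
    (∀ ub : X,
      (∀ u : X, (∑ i, ‖ub - v i‖ ^ p) ^ (1 / p) ≤ (∑ i, ‖u - v i‖ ^ p) ^ (1 / p)) ↔
        ∃ xs : Fin n → (X →L[ℝ] ℝ),
          (∑ i, xs i) = 0 ∧ (∑ i, ‖xs i‖ ^ q) = 1 ∧
          ∀ i, xs i (ub - v i) = ‖xs i‖ * ‖ub - v i‖ ∧
            ‖xs i‖ ^ q = ‖ub - v i‖ ^ p / ∑ j, ‖ub - v j‖ ^ p) ∧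
    (∀ ub : X, ∀ xs : Fin n → (X →L[ℝ] ℝ),
      (∀ u : X, (∑ i, ‖ub - v i‖ ^ p) ^ (1 / p) ≤ (∑ i, ‖u - v i‖ ^ p) ^ (1 / p)) →
      (∑ i, xs i) = 0 → (∑ i, ‖xs i‖ ^ q) = 1 →
      (∀ i, xs i (ub - v i) = ‖xs i‖ * ‖ub - v i‖ ∧
        ‖xs i‖ ^ q = ‖ub - v i‖ ^ p / ∑ j, ‖ub - v j‖ ^ p) →
      {u : X | ∀ w : X,
          (∑ i, ‖u - v i‖ ^ p) ^ (1 / p) ≤ (∑ i, ‖w - v i‖ ^ p) ^ (1 / p)} =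
        ⋂ i, ({u : X | xs i (u - v i) = ‖xs i‖ * ‖u - v i‖} ∩
          {u : X | ‖xs i‖ ^ q = ‖u - v i‖ ^ p / ∑ j, ‖u - v j‖ ^ p})) :=
  stmt_19_general n hn v hv p q hp hpq
end
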